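/- arXiv:2011.13128 — 9 statements merged into one kernel-verified Lean document; each statement's English description precedes it below -/
import Mathlib

section
/- Let X be a compact metric space, f : X → X continuous, and x, y ∈ X. Suppose (q_i) is a strictly increasing sequence of positive integers with bounded gaps: there exists M > 0 with q_{i+1} - q_i ≤ M for all i. If the lower density of times i < n with d(f^i(x), f^i(y)) < ε is zero for some ε > 0 (i.e., liminf_{n→∞} (1/n)#{0 ≤ i < n : d(f^i x, f^i y) < ε} = 0), then liminf_{n→∞} (1/n)#{0 ≤ i < n : d(f^{q_i} x, f^{q_i} y) < ε} = 0. -/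
/-!
Bounded gaps give `q i ≤ q 0 + i * M`, so for `n = (m - q 0) / M` the times `q 0, …, q (n - 1)`
are distinct and lie below `m`. Hence the sampled density up to `n` is at most `m / n ≤ 2 * M` times
the full density up to `m`, and since `n → ∞` with `m`, a sequence of `m` along which the full
density tends to `0` yields one along which the sampled density does.
-/

open Filter Set
open scoped Classical

/-- Lower density of times `i < n` with `dist (f^[i] x) (f^[i] y) < t`. -/
noncomputable def ldens {X : Type*} [MetricSpace X] (f : X → X) (x y : X) (t : ℝ) : ℝ :=
  Filter.liminf (fun n : ℕ =>
    (((Finset.range n).filter (fun i => dist (f^[i] x) (f^[i] y) < t)).card : ℝ) / n)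
    Filter.atTop

/-- Upper density of times `i < n` with `dist (f^[i] x) (f^[i] y) < t`. -/
noncomputable def udens {X : Type*} [MetricSpace X] (f : X → X) (x y : X) (t : ℝ) : ℝ :=
  Filter.limsup (fun n : ℕ =>
    (((Finset.range n).filter (fun i => dist (f^[i] x) (f^[i] y) < t)).card : ℝ) / n)
    Filter.atTop

/-- Lower density along the sequence of times `q i`. -/
noncomputable def ldensSeq {X : Type*} [MetricSpace X] (f : X → X) (q : ℕ → ℕ)
    (x y : X) (t : ℝ) : ℝ :=
  Filter.liminf (fun n : ℕ =>
    (((Finset.range n).filter (fun i => dist (f^[q i] x) (f^[q i] y) < t)).card : ℝ) / n)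
    Filter.atTop

/-- Upper density along the sequence of times `q i`. -/
noncomputable def udensSeq {X : Type*} [MetricSpace X] (f : X → X) (q : ℕ → ℕ)
    (x y : X) (t : ℝ) : ℝ :=
  Filter.limsup (fun n : ℕ =>
    (((Finset.range n).filter (fun i => dist (f^[q i] x) (f^[q i] y) < t)).card : ℝ) / n)
    Filter.atTop

lemma le_add_mul_of_sub_le {q : ℕ → ℕ} {M : ℕ} (hgap : ∀ i, q (i + 1) - q i ≤ M) (i : ℕ) :
    q i ≤ q 0 + i * M := by
  induction i with
  | zero => simp
  | succ i ih =>
    have := hgap i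
    rw [Nat.succ_mul]
    omega

lemma card_filter_range_comp_le (P : ℕ → Prop) [DecidablePred P] {q : ℕ → ℕ} {n m : ℕ}
    (hinj : InjOn q (Finset.range n)) (hlt : ∀ i < n, q i < m) :
    ((Finset.range n).filter (fun i => P (q i))).card ≤ ((Finset.range m).filter P).card := by
  refine Finset.card_le_card_of_injOn q (fun i hi => ?_) (hinj.mono fun i hi => by simp_all)
  simp only [Finset.coe_filter, Finset.mem_range, mem_ofPred_eq] at hi ⊢
  exact ⟨hlt i hi.1, hi.2⟩

lemma card_filter_range_div_le_one (P : ℕ → Prop) [DecidablePred P] (n : ℕ) :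
    (((Finset.range n).filter P).card : ℝ) / n ≤ 1 :=
  div_le_one_of_le₀ (by exact_mod_cast (Finset.card_filter_le _ _).trans_eq (Finset.card_range n))
    n.cast_nonneg

lemma card_filter_range_comp_div_le_two_mul (P : ℕ → Prop) [DecidablePred P] {q : ℕ → ℕ}
    (hq : StrictMono q) {M : ℕ} (hM : 0 < M) (hgap : ∀ i, q (i + 1) - q i ≤ M) {m : ℕ}
    (hm : 2 * (q 0 + M) ≤ m) :
    (((Finset.range ((m - q 0) / M)).filter (fun i => P (q i))).card : ℝ) / ((m - q 0) / M : ℕ)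
      ≤ 2 * M * ((((Finset.range m).filter P).card : ℝ) / m) := by
  set n := (m - q 0) / M
  have hnM : n * M ≤ m - q 0 := Nat.div_mul_le_self _ _
  have hnM' : m - q 0 < n * M + M := Nat.lt_div_mul_add hM
  have hn : 0 < n := Nat.pos_of_ne_zero fun h => by simp [h] at hnM'; omega
  have hlt : ∀ i < n, q i < m := fun i hi => by
    have := le_add_mul_of_sub_le hgap i
    have := Nat.mul_lt_mul_of_pos_right hi hM
    omega
  have hcard := card_filter_range_comp_le P hq.injective.injOn hlt
  have hmn : (m : ℝ) ≤ 2 * M * n := by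
    exact_mod_cast (by rw [mul_assoc, mul_comm M]; omega : m ≤ 2 * M * n)
  have hm0 : (0 : ℝ) < m := by exact_mod_cast (by omega : 0 < m)
  have hn' : (0 : ℝ) < n := by exact_mod_cast hn
  calc _ ≤ (((Finset.range m).filter P).card : ℝ) / n := by gcongr
    _ ≤ _ := by
      rw [mul_div_assoc', div_le_div_iff₀ hn' hm0]
      nlinarith [mul_le_mul_of_nonneg_left hmn (Nat.cast_nonneg ((Finset.range m).filter P).card)]

lemma liminf_eq_zero_of_eventually_le_mul_comp {a b : ℕ → ℝ} {φ : ℕ → ℕ} {C : ℝ}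
    (ha : IsBoundedUnder (· ≤ ·) atTop a) (hb : IsBoundedUnder (· ≤ ·) atTop b) (hb0 : 0 ≤ b)
    (hC : 0 ≤ C) (hφ : Tendsto φ atTop atTop) (hba : ∀ᶠ m in atTop, b (φ m) ≤ C * a m)
    (ha0 : liminf a atTop = 0) : liminf b atTop = 0 := by
  have hb_below : IsBoundedUnder (· ≥ ·) atTop b := isBoundedUnder_of ⟨0, hb0⟩
  have key : ∀ δ > 0, liminf b atTop ≤ C * δ := fun δ hδ => by
    have hsmall : ∃ᶠ m in atTop, a m < δ :=
      frequently_lt_of_liminf_lt ha.isCoboundedUnder_ge (ha0 ▸ hδ)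
    refine liminf_le_of_frequently_le (hφ.frequently ?_) hb_below
    exact (hsmall.and_eventually hba).mono fun m ⟨hlt, hle⟩ =>
      hle.trans (mul_le_mul_of_nonneg_left hlt.le hC)
  refine le_antisymm (le_of_forall_pos_le_add fun ε hε => ?_)
    (le_liminf_of_le hb.isCoboundedUnder_ge (Eventually.of_forall hb0))
  calc liminf b atTop ≤ C * (ε / (C + 1)) := key _ (by positivity)
    _ ≤ 0 + ε := by
      rw [zero_add, mul_div_assoc', div_le_iff₀ (by positivity)]
      linarith

theorem stmt_0_general {X : Type*} [MetricSpace X]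
    (f : X → X) (x y : X)
    (q : ℕ → ℕ) (hq : StrictMono q)
    (M : ℕ) (hM : 0 < M) (hgap : ∀ i, q (i + 1) - q i ≤ M)
    (ε : ℝ) (h : ldens f x y ε = 0) :
    ldensSeq f q x y ε = 0 := by
  set P : ℕ → Prop := fun j => dist (f^[j] x) (f^[j] y) < ε
  refine liminf_eq_zero_of_eventually_le_mul_comp (C := 2 * M)
    (isBoundedUnder_of ⟨1, card_filter_range_div_le_one P⟩)
    (isBoundedUnder_of ⟨1, card_filter_range_div_le_one (fun i => P (q i))⟩)
    (fun n => by positivity) (by positivity)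
    ((Nat.tendsto_div_const_atTop hM.ne').comp (tendsto_sub_atTop_nat (q 0))) ?_ h
  filter_upwards [eventually_ge_atTop (2 * (q 0 + M))] with m hm
  exact card_filter_range_comp_div_le_two_mul P hq hM hgap hm

theorem stmt_0 {X : Type*} [MetricSpace X] [CompactSpace X]
    (f : X → X) (hf : Continuous f) (x y : X)
    (q : ℕ → ℕ) (hq : StrictMono q) (hqpos : ∀ i, 0 < q i)
    (M : ℕ) (hM : 0 < M) (hgap : ∀ i, q (i + 1) - q i ≤ M)
    (ε : ℝ) (hε : 0 < ε) (h : ldens f x y ε = 0) :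
    ldensSeq f q x y ε = 0 :=
  stmt_0_general f x y q hq M hM hgap ε h
end

section
/- Let X be a compact metric space, f : X → X continuous, and x, y ∈ X. Suppose (q_i) is a strictly increasing sequence of positive integers with q_{i+1} - q_i ≤ M for all i. If limsup_{n→∞} (1/n)#{0 ≤ i < n : d(f^i x, f^i y) < t} = 1 for all t > 0, then limsup_{n→∞} (1/n)#{0 ≤ i < n : d(f^{q_i} x, f^{q_i} y) < t} = 1 for all t > 0. -/
/-!
A bad time `i < n` of the subsequence is a bad time `q i < N` of the full orbit, where `n` is the
first index with `N ≤ q n`. Bounded gaps give `N ≤ 2 M n` once `N > 2 q 0`, so the proportion of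
bad times along `q` up to `n` is at most `2 M` times the proportion of bad times up to `N`; the
latter is frequently arbitrarily small.
-/

open Filter Set
open scoped Classical

lemma le_add_mul_of_forall_sub_le {q : ℕ → ℕ} {M : ℕ} (hgap : ∀ i, q (i + 1) - q i ≤ M) (k : ℕ) :
    q k ≤ q 0 + k * M := by
  induction k with
  | zero => simp
  | succ k ih => have := hgap k; rw [Nat.succ_mul]; omega

lemma StrictMono.exists_forall_lt_and_le {q : ℕ → ℕ} (hq : StrictMono q) (N : ℕ) :
    ∃ n, (∀ i < n, q i < N) ∧ N ≤ q n :=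
  have hex : ∃ n, N ≤ q n := ⟨N, hq.le_apply⟩
  ⟨Nat.find hex, fun _ hi => not_le.1 (Nat.find_min hex hi), Nat.find_spec hex⟩

namespace Nat

noncomputable def partialDensity (P : ℕ → Prop) [DecidablePred P] (n : ℕ) : ℝ :=
  (((Finset.range n).filter P).card : ℝ) / n

variable {P : ℕ → Prop} [DecidablePred P]

lemma partialDensity_nonneg (n : ℕ) : 0 ≤ partialDensity P n := by
  unfold partialDensity; positivity

lemma partialDensity_le_one (n : ℕ) : partialDensity P n ≤ 1 := by
  refine div_le_one_of_le₀ ?_ (Nat.cast_nonneg n)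
  exact_mod_cast (Finset.card_filter_le _ _).trans (Finset.card_range n).le

lemma one_sub_partialDensity {n : ℕ} (hn : 0 < n) :
    1 - partialDensity P n = (((Finset.range n).filter (fun i => ¬ P i)).card : ℝ) / n := by
  have hsum : (((Finset.range n).filter P).card : ℝ)
      + ((Finset.range n).filter (fun i => ¬ P i)).card = n := by
    exact_mod_cast (Finset.card_filter_add_card_filter_not P).trans (Finset.card_range n)
  have hn' : (n : ℝ) ≠ 0 := by positivity
  rw [partialDensity, eq_div_iff hn', sub_mul, div_mul_cancel₀ _ hn']
  linarith

lemma limsup_partialDensity_eq_one_iff :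
    limsup (partialDensity P) atTop = 1 ↔ ∀ ε > 0, ∃ᶠ n in atTop, 1 - ε < partialDensity P n := by
  have hcobdd : IsCoboundedUnder (· ≤ ·) atTop (partialDensity P) :=
    isCoboundedUnder_le_of_le atTop partialDensity_nonneg
  refine ⟨fun h ε hε => frequently_lt_of_lt_limsup hcobdd (by linarith), fun h => ?_⟩
  refine le_antisymm (limsup_le_of_le hcobdd (.of_forall partialDensity_le_one))
    (le_of_forall_sub_le fun ε hε => ?_)
  exact le_limsup_of_frequently_le ((h ε hε).mono fun _ => le_of_lt)
    (isBoundedUnder_of ⟨1, partialDensity_le_one⟩)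

lemma card_filter_comp_le {q : ℕ → ℕ} (hq : q.Injective) {n N : ℕ} (hlt : ∀ i < n, q i < N) :
    ((Finset.range n).filter (fun i => P (q i))).card ≤ ((Finset.range N).filter P).card :=
  Finset.card_le_card_of_injOn q
    (fun i hi => by
      simp only [Finset.mem_coe, Finset.mem_filter, Finset.mem_range] at hi ⊢
      exact ⟨hlt i hi.1, hi.2⟩)
    hq.injOn

lemma one_sub_partialDensity_comp_le {q : ℕ → ℕ} (hq : StrictMono q) {M : ℕ}
    (hgap : ∀ i, q (i + 1) - q i ≤ M) {n N : ℕ} (hN : 2 * q 0 < N)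
    (hlt : ∀ i < n, q i < N) (hle : N ≤ q n) :
    1 - partialDensity (fun i => P (q i)) n ≤ 2 * M * (1 - partialDensity P N) := by
  have hn : 0 < n := Nat.pos_of_ne_zero fun h => by subst h; omega
  have hNn : (N : ℝ) ≤ 2 * M * n := by
    have hq0 : (2 * q 0 : ℝ) < N := by exact_mod_cast hN
    have hqn : (N : ℝ) ≤ q 0 + n * M := by
      exact_mod_cast hle.trans (le_add_mul_of_forall_sub_le hgap n)
    linarith
  have hbad := card_filter_comp_le (P := fun j => ¬ P j) hq.injective hlt
  set B : ℕ := ((Finset.range N).filter fun j => ¬ P j).card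
  rw [one_sub_partialDensity hn, one_sub_partialDensity (by omega)]
  calc _ ≤ (B : ℝ) / n := by gcongr
    _ = B / N * (N / n) := (div_mul_div_cancel₀ (Nat.cast_ne_zero.2 (by omega))).symm
    _ ≤ B / N * (2 * M) := by gcongr; rwa [div_le_iff₀ (by positivity)]
    _ = _ := mul_comm _ _

theorem limsup_partialDensity_comp_eq_one {q : ℕ → ℕ} (hq : StrictMono q) {M : ℕ}
    (hgap : ∀ i, q (i + 1) - q i ≤ M) (h : limsup (partialDensity P) atTop = 1) :
    limsup (partialDensity fun i => P (q i)) atTop = 1 := by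
  rw [limsup_partialDensity_eq_one_iff] at h ⊢
  intro ε hε
  have hM : (0 : ℝ) < M := Nat.cast_pos.2 <| by have := hgap 0; have := hq (Nat.lt_add_one 0); omega
  choose n hlt hle using hq.exists_forall_lt_and_le
  have hn : Tendsto n atTop atTop := tendsto_atTop_atTop.2 fun m => ⟨q m + 1, fun N hN =>
    le_of_lt <| lt_of_not_ge fun hnm => by have := hq.monotone hnm; have := hle N; omega⟩
  have hcmp : ∀ᶠ N in atTop,
      1 - partialDensity (fun i => P (q i)) (n N) ≤ 2 * M * (1 - partialDensity P N) :=
    eventually_atTop.2 ⟨2 * q 0 + 1, fun N hN =>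
      one_sub_partialDensity_comp_le hq hgap (by omega) (hlt N) (hle N)⟩
  refine hn.frequently (((h (ε / (2 * M)) (by positivity)).and_eventually hcmp).mono ?_)
  rintro N ⟨hgood, hbad⟩
  have : 2 * M * (1 - partialDensity P N) < ε :=
    calc _ < 2 * M * (ε / (2 * M)) := by gcongr; linarith
      _ = ε := by field_simp
  linarith

end Nat

theorem stmt_1_general {X : Type*} [MetricSpace X]
    (f : X → X) (x y : X)
    (q : ℕ → ℕ) (hq : StrictMono q)
    (M : ℕ) (hgap : ∀ i, q (i + 1) - q i ≤ M)
    (h : ∀ t : ℝ, 0 < t → udens f x y t = 1) :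
    ∀ t : ℝ, 0 < t → udensSeq f q x y t = 1 := fun t ht =>
  Nat.limsup_partialDensity_comp_eq_one (P := fun i => dist (f^[i] x) (f^[i] y) < t) hq hgap
    (h t ht)

theorem stmt_1 {X : Type*} [MetricSpace X] [CompactSpace X]
    (f : X → X) (hf : Continuous f) (x y : X)
    (q : ℕ → ℕ) (hq : StrictMono q) (hqpos : ∀ i, 0 < q i)
    (M : ℕ) (hgap : ∀ i, q (i + 1) - q i ≤ M)
    (h : ∀ t : ℝ, 0 < t → udens f x y t = 1) :
    ∀ t : ℝ, 0 < t → udensSeq f q x y t = 1 :=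
  stmt_1_general f x y q hq M hgap h
end

section
/- Let X be a compact metric space, f : X → X continuous, and x, y ∈ X. Suppose (q_i) is a strictly increasing sequence of positive integers with q_{i+1} - q_i ≤ M for all i. If liminf_{n→∞} (1/n)#{0 ≤ i < n : d(f^{q_i} x, f^{q_i} y) < ε} = 0 for some ε > 0, then there exists s > 0 with liminf_{n→∞} (1/n)#{0 ≤ i < n : d(f^i x, f^i y) < s} = 0. -/
open Filter Set
open scoped Classical

/-! If `d(fⁱx, fⁱy) < s` then, by uniform continuity of `f, f², …, f^M`, the pair stays
`ε`-close at every time in `[i, i + M]`, in particular at the next time `q j ≥ i` of the sequence.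
Sending `i` to that `j` is at most `(M + 1)`-to-one (apart from the `q 0` times before the sequence
starts), so the number of `s`-close times below `n` is at most `q 0 + (M + 1)` times the number of
`ε`-close sequence times below `n`, and lower density zero transfers. -/

open scoped Finset

theorem exists_pos_forall_dist_iterate_lt {X : Type*} [MetricSpace X] [CompactSpace X]
    {f : X → X} (hf : Continuous f) {ε : ℝ} (hε : 0 < ε) (M : ℕ) :
    ∃ s > 0, ∀ a b : X, dist a b < s → ∀ r ≤ M, dist (f^[r] a) (f^[r] b) < ε := by
  have huc : UniformContinuous fun a (r : Fin (M + 1)) => f^[r] a :=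
    CompactSpace.uniformContinuous_of_continuous (continuous_pi fun r => hf.iterate r)
  obtain ⟨s, hs, hclose⟩ := Metric.uniformContinuous_iff.mp huc ε hε
  exact ⟨s, hs, fun a b hab r hr =>
    (dist_le_pi_dist _ _ (⟨r, Nat.lt_succ_of_le hr⟩ : Fin (M + 1))).trans_lt (hclose hab)⟩

theorem StrictMono.exists_le_apply_le_add {q : ℕ → ℕ} (hq : StrictMono q) {M : ℕ}
    (hgap : ∀ i, q (i + 1) - q i ≤ M) {i : ℕ} (hi : q 0 ≤ i) :
    ∃ j ≤ i, i ≤ q j ∧ q j ≤ i + M := by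
  have hex : ∃ j, i ≤ q j := ⟨i, hq.le_apply⟩
  refine ⟨Nat.find hex, Nat.find_min' hex hq.le_apply, Nat.find_spec hex, ?_⟩
  rcases h : Nat.find hex with _ | k
  · have := Nat.find_spec hex
    rw [h] at this
    omega
  · have hk : ¬ i ≤ q k := Nat.find_min hex (by omega)
    have := hgap k
    omega

theorem card_filter_range_le_add_mul {q : ℕ → ℕ} (hq : StrictMono q) {M : ℕ}
    (hgap : ∀ i, q (i + 1) - q i ≤ M) {P Q : ℕ → Prop} [DecidablePred P] [DecidablePred Q]
    (hPQ : ∀ i t, P i → i ≤ t → t ≤ i + M → Q t) (n : ℕ) :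
    #{i ∈ Finset.range n | P i} ≤ q 0 + (M + 1) * #{j ∈ Finset.range n | Q (q j)} := by
  have hcover : {i ∈ Finset.range n | P i} ⊆ Finset.range (q 0) ∪
      {j ∈ Finset.range n | Q (q j)}.biUnion fun j => Finset.Icc (q j - M) (q j) := by
    intro i hi
    rw [Finset.mem_filter, Finset.mem_range] at hi
    rcases lt_or_ge i (q 0) with hi0 | hi0
    · exact Finset.mem_union_left _ (Finset.mem_range.mpr hi0)
    obtain ⟨j, hji, hiq, hqi⟩ := hq.exists_le_apply_le_add hgap hi0
    refine Finset.mem_union_right _ (Finset.mem_biUnion.mpr ⟨j, ?_, ?_⟩)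
    · simp only [Finset.mem_filter, Finset.mem_range]
      exact ⟨by omega, hPQ i (q j) hi.2 hiq hqi⟩
    · exact Finset.mem_Icc.mpr ⟨by omega, hiq⟩
  calc #{i ∈ Finset.range n | P i}
      ≤ #(Finset.range (q 0)) + #({j ∈ Finset.range n | Q (q j)}.biUnion
          fun j => Finset.Icc (q j - M) (q j)) :=
        (Finset.card_le_card hcover).trans (Finset.card_union_le _ _)
    _ ≤ q 0 + #{j ∈ Finset.range n | Q (q j)} * (M + 1) := by
        rw [Finset.card_range]
        gcongr
        exact Finset.card_biUnion_le_card_mul _ _ _ fun j _ => by simp only [Nat.card_Icc]; omega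
    _ = q 0 + (M + 1) * #{j ∈ Finset.range n | Q (q j)} := by ring

theorem liminf_card_div_eq_zero_of_le_add_mul {A B : ℕ → ℕ} {C K : ℕ}
    (hAB : ∀ n, A n ≤ C + K * B n) (hA : ∀ n, A n ≤ n) (hB : ∀ n, B n ≤ n)
    (h : liminf (fun n => (B n : ℝ) / n) atTop = 0) :
    liminf (fun n => (A n : ℝ) / n) atTop = 0 := by
  have ratio_mem_Icc {D : ℕ → ℕ} (hD : ∀ n, D n ≤ n) (n : ℕ) : (D n : ℝ) / n ∈ Icc 0 1 :=
    ⟨by positivity, div_le_one_of_le₀ (by exact_mod_cast hD n) n.cast_nonneg⟩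
  refine le_antisymm (le_of_forall_pos_le_add fun δ hδ => ?_) ?_
  · set δ' := δ / (K + 1)
    have hδ' : 0 < δ' := by positivity
    have hBsmall : ∃ᶠ n in atTop, (B n : ℝ) / n < δ' :=
      frequently_lt_of_liminf_lt (isCoboundedUnder_ge_of_le _ fun n => (ratio_mem_Icc hB n).2)
        (h ▸ hδ')
    have hCsmall : ∀ᶠ n : ℕ in atTop, (C : ℝ) / n < δ' :=
      (tendsto_order.1 (tendsto_const_div_atTop_nhds_zero_nat (C : ℝ))).2 δ' hδ'
    refine liminf_le_of_frequently_le ((hBsmall.and_eventually hCsmall).mono ?_)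
      (isBoundedUnder_of ⟨0, fun n => (ratio_mem_Icc hA n).1⟩)
    rintro n ⟨hBn, hCn⟩
    calc (A n : ℝ) / n ≤ (C + K * B n) / n := by gcongr; exact_mod_cast hAB n
      _ = C / n + K * (B n / n) := by ring
      _ ≤ δ' + K * δ' := by gcongr
      _ = 0 + δ := by simp only [δ']; field_simp; ring
  · exact le_liminf_of_le (isCoboundedUnder_ge_of_le _ fun n => (ratio_mem_Icc hA n).2)
      (Eventually.of_forall fun n => (ratio_mem_Icc hA n).1)

theorem stmt_2_general {X : Type*} [MetricSpace X] [CompactSpace X]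
    (f : X → X) (hf : Continuous f) (x y : X)
    (q : ℕ → ℕ) (hq : StrictMono q)
    (M : ℕ) (hgap : ∀ i, q (i + 1) - q i ≤ M)
    (ε : ℝ) (hε : 0 < ε) (h : ldensSeq f q x y ε = 0) :
    ∃ s : ℝ, 0 < s ∧ ldens f x y s = 0 := by
  obtain ⟨s, hs, hclose⟩ := exists_pos_forall_dist_iterate_lt hf hε M
  have hPQ (i t : ℕ) (hi : dist (f^[i] x) (f^[i] y) < s) (hit : i ≤ t) (hti : t ≤ i + M) :
      dist (f^[t] x) (f^[t] y) < ε := by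
    obtain ⟨r, rfl⟩ := Nat.exists_eq_add_of_le hit
    rw [add_comm, Function.iterate_add_apply, Function.iterate_add_apply]
    exact hclose _ _ hi r (by omega)
  exact ⟨s, hs, liminf_card_div_eq_zero_of_le_add_mul
    (card_filter_range_le_add_mul hq hgap hPQ)
    (fun n => (Finset.card_filter_le _ _).trans_eq (Finset.card_range n))
    (fun n => (Finset.card_filter_le _ _).trans_eq (Finset.card_range n)) h⟩

theorem stmt_2 {X : Type*} [MetricSpace X] [CompactSpace X]
    (f : X → X) (hf : Continuous f) (x y : X)
    (q : ℕ → ℕ) (hq : StrictMono q) (hqpos : ∀ i, 0 < q i)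
    (M : ℕ) (hgap : ∀ i, q (i + 1) - q i ≤ M)
    (ε : ℝ) (hε : 0 < ε) (h : ldensSeq f q x y ε = 0) :
    ∃ s : ℝ, 0 < s ∧ ldens f x y s = 0 :=
  stmt_2_general f hf x y q hq M hgap ε hε h
end

section
/- Let X be a compact metric space, f : X → X continuous, and x, y ∈ X. Suppose (q_i) is a strictly increasing sequence of positive integers with q_{i+1} - q_i ≤ M for all i. If limsup_{n→∞} (1/n)#{0 ≤ i < n : d(f^{q_i} x, f^{q_i} y) < s} = 1 for all s > 0, then limsup_{n→∞} (1/n)#{0 ≤ i < n : d(f^i x, f^i y) < t} = 1 for all t > 0. -/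
open Filter Set
open scoped Classical

/-- Locate `m` in an interval `[q i, q (i+1))`. -/
lemma exists_interval_aux {q : ℕ → ℕ} (_hmono : Monotone q) :
    ∀ n m, q 0 ≤ m → m < q n → ∃ i, i < n ∧ q i ≤ m ∧ m < q (i + 1) := by
  intro n
  induction n with
  | zero => intro m h0 hn; exact absurd (h0.trans_lt hn) (lt_irrefl _)
  | succ n ih =>
    intro m h0 hn
    by_cases hcase : q n ≤ m
    · exact ⟨n, Nat.lt_succ_self n, hcase, hn⟩
    · obtain ⟨i, hi, h1, h2⟩ := ih m h0 (lt_of_not_ge hcase)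
      exact ⟨i, hi.trans (Nat.lt_succ_self n), h1, h2⟩

theorem stmt_3 {X : Type*} [MetricSpace X] [CompactSpace X]
    (f : X → X) (hf : Continuous f) (x y : X)
    (q : ℕ → ℕ) (hq : StrictMono q) (hqpos : ∀ i, 0 < q i)
    (M : ℕ) (hgap : ∀ i, q (i + 1) - q i ≤ M)
    (h : ∀ s : ℝ, 0 < s → udensSeq f q x y s = 1) :
    ∀ t : ℝ, 0 < t → udens f x y t = 1 := by
  intro t ht
  -- the full-orbit density sequence
  set u : ℕ → ℝ := fun n =>
    (((Finset.range n).filter (fun i => dist (f^[i] x) (f^[i] y) < t)).card : ℝ) / n with hu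
  have hu_nonneg : ∀ n, 0 ≤ u n := fun n => div_nonneg (by positivity) (by positivity)
  have hu_le_one : ∀ n, u n ≤ 1 := by
    intro n
    rcases Nat.eq_zero_or_pos n with rfl | hn
    · simp [hu]
    · rw [hu, div_le_one (by exact_mod_cast hn)]
      exact_mod_cast (Finset.card_filter_le _ _).trans (by simp)
  have hbdd : IsBoundedUnder (· ≤ ·) atTop u :=
    Filter.isBoundedUnder_of ⟨1, hu_le_one⟩
  have hcobdd : IsCoboundedUnder (· ≤ ·) atTop u :=
    (Filter.isBoundedUnder_of ⟨0, hu_nonneg⟩ :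
      IsBoundedUnder (· ≥ ·) atTop u).isCoboundedUnder_le
  have hle : udens f x y t ≤ 1 := Filter.limsup_le_of_le hcobdd (Eventually.of_forall hu_le_one)
  -- uniform continuity: choose s
  have hgc : Continuous (fun a : X => fun j : Fin (M + 1) => f^[(j : ℕ)] a) := by
    apply continuous_pi
    intro j
    exact hf.iterate _
  have hguc := CompactSpace.uniformContinuous_of_continuous hgc
  rw [Metric.uniformContinuous_iff] at hguc
  obtain ⟨s, hs, hsd⟩ := hguc t ht
  have key : ∀ a b : X, dist a b < s → ∀ j ≤ M, dist (f^[j] a) (f^[j] b) < t := by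
    intro a b hab j hj
    have := (dist_pi_lt_iff ht).mp (hsd hab) ⟨j, Nat.lt_succ_of_le hj⟩
    exact this
  -- it suffices to show 1 - ε ≤ udens for every ε > 0
  have main : ∀ ε : ℝ, 0 < ε → 1 - (M + 1) * ε ≤ udens f x y t := by
    intro ε hε
    -- good/bad along the sequence
    set v : ℕ → ℝ := fun n =>
      (((Finset.range n).filter (fun i => dist (f^[q i] x) (f^[q i] y) < s)).card : ℝ) / n with hv
    have hv_nonneg : ∀ n, 0 ≤ v n := fun n => div_nonneg (by positivity) (by positivity)
    have hv_cobdd : IsCoboundedUnder (· ≤ ·) atTop v :=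
      (Filter.isBoundedUnder_of ⟨0, hv_nonneg⟩ :
        IsBoundedUnder (· ≥ ·) atTop v).isCoboundedUnder_le
    have hfreq : ∃ᶠ n in atTop, 1 - ε < v n := by
      apply Filter.frequently_lt_of_lt_limsup hv_cobdd
      rw [show Filter.limsup v atTop = udensSeq f q x y s from rfl, h s hs]
      linarith
    -- choose n0 with q 0 ≤ ε * n0
    obtain ⟨n0, hn0⟩ := exists_nat_ge ((q 0 : ℝ) / ε)
    have hn0' : (q 0 : ℝ) ≤ ε * n0 := by
      rw [div_le_iff₀ hε] at hn0; linarith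
    have hfreq2 : ∃ᶠ n in atTop, (1 - ε < v n ∧ n0 + 1 ≤ n) :=
      hfreq.and_eventually (eventually_ge_atTop (n0 + 1))
    -- transfer to the full sequence at times N = q n
    have hfreq3 : ∃ᶠ N in atTop, 1 - (M + 1) * ε ≤ u N := by
      apply hq.tendsto_atTop.frequently
      apply hfreq2.mono
      rintro n ⟨hvn, hn0n⟩
      -- work at N = q n
      set N := q n with hN
      have hnN : n ≤ N := hq.le_apply
      have hNpos : 0 < N := hqpos n
      have hNposR : (0 : ℝ) < N := by exact_mod_cast hNpos
      have hnpos : 0 < n := by omega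
      have hnposR : (0 : ℝ) < n := by exact_mod_cast hnpos
      set S := (Finset.range N).filter (fun i => dist (f^[i] x) (f^[i] y) < t) with hS
      set G := (Finset.range n).filter (fun i => dist (f^[q i] x) (f^[q i] y) < s) with hG
      set B := (Finset.range n).filter (fun i => ¬ dist (f^[q i] x) (f^[q i] y) < s) with hB
      have hGB : G.card + B.card = n := by
        rw [hG, hB, Finset.card_filter_add_card_filter_not, Finset.card_range]
      -- the complement of S in range N is covered
      have hcover : (Finset.range N) \ S ⊆
          (Finset.range (q 0)) ∪ B.biUnion (fun i => Finset.Ico (q i) (q (i + 1))) := by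
        intro m hm
        simp only [Finset.mem_sdiff, Finset.mem_range, hS, Finset.mem_filter, not_and,
          not_lt] at hm
        obtain ⟨hmN, hmt⟩ := hm
        by_cases hm0 : m < q 0
        · exact Finset.mem_union_left _ (Finset.mem_range.mpr hm0)
        · push_neg at hm0
          obtain ⟨i, hin, hi1, hi2⟩ := exists_interval_aux hq.monotone n m hm0 hmN
          refine Finset.mem_union_right _ (Finset.mem_biUnion.mpr ⟨i, ?_, ?_⟩)
          · rw [hB, Finset.mem_filter, Finset.mem_range]
            refine ⟨hin, fun hgood => ?_⟩
            -- if i were good, m would be in S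
            have hj : m - q i ≤ M := by
              have := hgap i
              omega
            have : dist (f^[m] x) (f^[m] y) < t := by
              have hm' : m = (m - q i) + q i := by omega
              rw [hm', Function.iterate_add_apply, Function.iterate_add_apply]
              exact key _ _ hgood _ hj
            exact absurd (hmt hmN) (not_le.mpr this)
          · exact Finset.mem_Ico.mpr ⟨hi1, hi2⟩
      have hcard_cover :
          ((Finset.range (q 0)) ∪ B.biUnion (fun i => Finset.Ico (q i) (q (i + 1)))).card ≤
            q 0 + B.card * M := by
        refine (Finset.card_union_le _ _).trans ?_
        rw [Finset.card_range]
        gcongr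
        refine (Finset.card_biUnion_le).trans ?_
        calc ∑ i ∈ B, (Finset.Ico (q i) (q (i + 1))).card
            ≤ ∑ _i ∈ B, M := by
              apply Finset.sum_le_sum
              intro i _
              rw [Nat.card_Ico]
              exact hgap i
          _ = B.card * M := by rw [Finset.sum_const, smul_eq_mul]
      have hSsub : S ⊆ Finset.range N := Finset.filter_subset _ _
      have hcards : N ≤ S.card + (q 0 + B.card * M) := by
        have h1 : ((Finset.range N) \ S).card = N - S.card := by
          rw [Finset.card_sdiff_of_subset hSsub, Finset.card_range]
        have h2 := Finset.card_le_card hcover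
        have h3 := Finset.card_le_card hSsub
        rw [h1] at h2
        rw [Finset.card_range] at h3
        omega
      -- now real arithmetic
      have hBsmall : (B.card : ℝ) ≤ ε * N := by
        have hGn : (1 - ε) * n < (G.card : ℝ) := by
          rw [hv] at hvn
          calc (1 - ε) * n = (1 - ε) * n := rfl
            _ < ((G.card : ℝ) / n) * n := by
                apply mul_lt_mul_of_pos_right _ hnposR
                exact hvn
            _ = (G.card : ℝ) := by field_simp
        have hBn : (B.card : ℝ) = n - G.card := by
          have := hGB
          push_cast [← this]
          ring
        have hnN' : (n : ℝ) ≤ N := by exact_mod_cast hnN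
        nlinarith
      have hq0small : (q 0 : ℝ) ≤ ε * N := by
        have h1 : (n0 : ℝ) ≤ n := by exact_mod_cast (Nat.le_of_succ_le hn0n)
        have h2 : (n : ℝ) ≤ N := by exact_mod_cast hnN
        nlinarith
      have hcardsR : (N : ℝ) ≤ S.card + (q 0 + B.card * M) := by exact_mod_cast hcards
      have hfinal : (1 - (M + 1) * ε) * N ≤ (S.card : ℝ) := by
        have hM0 : (0 : ℝ) ≤ M := by positivity
        nlinarith
      show (1 : ℝ) - ((M : ℝ) + 1) * ε ≤ (S.card : ℝ) / (N : ℝ)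
      rw [le_div_iff₀ hNposR]
      exact hfinal
    have := Filter.le_limsup_of_frequently_le hfreq3 hbdd
    exact this
  -- conclude
  have hge : 1 ≤ udens f x y t := by
    refine le_of_forall_pos_le_add ?_
    intro ε hε
    have hM1 : (0 : ℝ) < (M : ℝ) + 1 := by positivity
    have := main (ε / ((M : ℝ) + 1)) (by positivity)
    have heq : ((M : ℝ) + 1) * (ε / ((M : ℝ) + 1)) = ε := by field_simp
    rw [heq] at this
    linarith
  linarith
end

section
/- Let (X,d) be a compact metric space and let (q_i) be a strictly increasing sequence of positive integers with q_{i+1} - q_i ≤ M for all i, for some fixed M. Then a continuous map f : X → X is distributionally chaotic if and only if f is distributionally chaotic in the sequence (q_i). -/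
open Filter Set
open scoped Classical

/-- f is distributionally chaotic (DC1). -/
def DC1 {X : Type*} [MetricSpace X] (f : X → X) : Prop :=
  ∃ S : Set X, ¬ S.Countable ∧ ∀ x ∈ S, ∀ y ∈ S, x ≠ y →
    (∃ ε : ℝ, 0 < ε ∧ ldens f x y ε = 0) ∧ ∀ t : ℝ, 0 < t → udens f x y t = 1

/-- f is distributionally chaotic in the sequence q. -/
def SDCin {X : Type*} [MetricSpace X] (f : X → X) (q : ℕ → ℕ) : Prop :=
  ∃ S : Set X, ¬ S.Countable ∧ ∀ x ∈ S, ∀ y ∈ S, x ≠ y →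
    (∃ ε : ℝ, 0 < ε ∧ ldensSeq f q x y ε = 0) ∧ ∀ t : ℝ, 0 < t → udensSeq f q x y t = 1

/-!
Bounded gaps give `q k ≤ q 0 + M k`, so `q` maps `{k < K | P (q k)}` injectively into
`{i < n | P i}` for some `n ≤ (q 0 + M + 1) K`: zero lower density of `P` passes to `P ∘ q`,
and applied to `¬P` so does upper density one. Conversely every time `i ≥ q 0` lies within `M`
of some `q k`, and uniform continuity of `f, …, f^[M]` on the compact space lets closeness
propagate forward in time over such a gap, at the price of shrinking the threshold. Each `q k`
then accounts for at most `2M + 1` times, so the count along `ℕ` is bounded by a multiple of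
the count along `q`, up to a constant.
-/

noncomputable def lowerDensity (P : ℕ → Prop) [DecidablePred P] : ℝ :=
  liminf (fun n : ℕ => (Nat.count P n : ℝ) / n) atTop

noncomputable def upperDensity (P : ℕ → Prop) [DecidablePred P] : ℝ :=
  limsup (fun n : ℕ => (Nat.count P n : ℝ) / n) atTop

section Density

variable (P : ℕ → Prop) [DecidablePred P]

lemma count_div_nonneg (n : ℕ) : 0 ≤ (Nat.count P n : ℝ) / n := by positivity

lemma count_div_le_one (n : ℕ) : (Nat.count P n : ℝ) / n ≤ 1 :=
  div_le_one_of_le₀ (by exact_mod_cast Nat.count_le P) (Nat.cast_nonneg n)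

lemma count_add_count_not (n : ℕ) : Nat.count P n + Nat.count (fun i => ¬P i) n = n := by
  simp only [Nat.count_eq_card_filter_range]
  rw [Finset.card_filter_add_card_filter_not, Finset.card_range]

lemma lowerDensity_eq_zero_iff :
    lowerDensity P = 0 ↔ ∀ η > 0, ∃ᶠ n in atTop, (Nat.count P n : ℝ) < η * n := by
  have hbdd : IsBoundedUnder (· ≥ ·) atTop (fun n : ℕ => (Nat.count P n : ℝ) / n) :=
    isBoundedUnder_of ⟨0, count_div_nonneg P⟩
  have hcobdd : IsCoboundedUnder (· ≥ ·) atTop (fun n : ℕ => (Nat.count P n : ℝ) / n) :=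
    (isBoundedUnder_of ⟨1, count_div_le_one P⟩).isCoboundedUnder_ge
  have hratio : ∀ η : ℝ, (∃ᶠ n in atTop, (Nat.count P n : ℝ) / n < η) ↔
      ∃ᶠ n in atTop, (Nat.count P n : ℝ) < η * n :=
    fun η => frequently_congr <| (eventually_gt_atTop 0).mono fun n hn =>
      div_lt_iff₀ (by exact_mod_cast hn)
  simp only [← hratio]
  constructor
  · intro h η hη
    exact frequently_lt_of_liminf_lt hcobdd (show lowerDensity P < η by rwa [h])
  · intro h
    refine le_antisymm (le_of_forall_pos_le_add fun η hη => ?_)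
      (le_liminf_of_le hcobdd (Eventually.of_forall (count_div_nonneg P)))
    rw [zero_add]
    exact liminf_le_of_frequently_le ((h η hη).mono fun n hn => hn.le) hbdd

lemma upperDensity_eq_one_iff : upperDensity P = 1 ↔ lowerDensity (fun i => ¬P i) = 0 := by
  have hdual : 1 - upperDensity P = lowerDensity (fun i => ¬P i) := by
    rw [upperDensity, Antitone.map_limsup_of_continuousAt (f := fun x : ℝ => 1 - x)
      (fun a b hab => sub_le_sub_left hab 1) _ (continuous_const.sub continuous_id).continuousAt
      (isBoundedUnder_of ⟨1, count_div_le_one P⟩)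
      (isBoundedUnder_of ⟨0, count_div_nonneg P⟩).isCoboundedUnder_le]
    refine liminf_congr ((eventually_gt_atTop 0).mono fun n hn => ?_)
    have hsum : (Nat.count P n : ℝ) + Nat.count (fun i => ¬P i) n = n := by
      exact_mod_cast count_add_count_not P n
    rw [Function.comp_apply, eq_div_iff (by positivity), sub_mul,
      div_mul_cancel₀ _ (by positivity)]
    linarith
  rw [← hdual, sub_eq_zero, eq_comm]

end Density

section Subsequence

variable {q : ℕ → ℕ} {M : ℕ}

lemma StrictMono.exists_apply_le_lt_apply_succ (hq : StrictMono q) {i : ℕ} (hi : q 0 ≤ i) :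
    ∃ k, q k ≤ i ∧ i < q (k + 1) := by
  have hex : ∃ k, i < q (k + 1) := ⟨i, (Nat.lt_succ_self i).trans_le hq.le_apply⟩
  refine ⟨Nat.find hex, ?_, Nat.find_spec hex⟩
  rcases Nat.eq_zero_or_eq_succ_pred (Nat.find hex) with h0 | hsucc
  · rwa [h0]
  · rw [hsucc]
    exact not_lt.1 (Nat.find_min hex (hsucc ▸ Nat.lt_succ_self _))

lemma apply_le_apply_zero_add_mul (hgap : ∀ i, q (i + 1) ≤ q i + M) (k : ℕ) :
    q k ≤ q 0 + M * k := by
  induction k with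
  | zero => simp
  | succ k ih => rw [Nat.mul_succ]; linarith [hgap k]

variable (P : ℕ → Prop) [DecidablePred P]

lemma count_comp_le_count (hq : StrictMono q) {K n : ℕ} (h : ∀ k < K, q k < n) :
    Nat.count (fun k => P (q k)) K ≤ Nat.count P n := by
  simp only [Nat.count_eq_card_filter_range]
  refine Finset.card_le_card_of_injOn q (fun k hk => ?_) hq.injective.injOn
  simp only [Finset.coe_filter, Finset.mem_range, Set.mem_ofPred_eq] at hk ⊢
  exact ⟨h k hk.1, hk.2⟩

lemma lowerDensity_comp_eq_zero (hq : StrictMono q) (hgap : ∀ i, q (i + 1) ≤ q i + M)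
    (h : lowerDensity P = 0) : lowerDensity (fun k => P (q k)) = 0 := by
  rw [lowerDensity_eq_zero_iff] at h ⊢
  intro η hη
  set C : ℝ := q 0 + M + 1
  have hC : 0 < C := by positivity
  refine frequently_atTop.2 fun N => ?_
  obtain ⟨n, hNn, hn⟩ := frequently_atTop.1 (h (η / C) (div_pos hη hC)) (q N + 1)
  obtain ⟨k, hk, hnk⟩ := hq.exists_apply_le_lt_apply_succ (i := n - 1)
    (by have := hq.monotone (Nat.zero_le N); omega)
  have hNk : N ≤ k + 1 := (hq.lt_iff_lt.1 (by omega : q N < q (k + 1))).le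
  refine ⟨k + 1, hNk, ?_⟩
  have hcount : (Nat.count (fun k => P (q k)) (k + 1) : ℝ) ≤ Nat.count P n := by
    exact_mod_cast count_comp_le_count P hq fun j hj => by
      have := hq.monotone (Nat.lt_succ_iff.1 hj); omega
  have hnC : (n : ℝ) ≤ C * (k + 1 : ℕ) := by
    have hn_le : n ≤ q 0 + M * (k + 1) := by
      have := apply_le_apply_zero_add_mul hgap (k + 1); omega
    calc (n : ℝ) ≤ q 0 + M * (k + 1 : ℕ) := by exact_mod_cast hn_le
      _ ≤ C * (k + 1 : ℕ) := by simp only [C]; push_cast; nlinarith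
  calc (Nat.count (fun k => P (q k)) (k + 1) : ℝ) ≤ Nat.count P n := hcount
    _ < η / C * n := hn
    _ ≤ η / C * (C * (k + 1 : ℕ)) := by gcongr
    _ = η * (k + 1 : ℕ) := by field_simp

lemma upperDensity_comp_eq_one (hq : StrictMono q) (hgap : ∀ i, q (i + 1) ≤ q i + M)
    (h : upperDensity P = 1) : upperDensity (fun k => P (q k)) = 1 := by
  rw [upperDensity_eq_one_iff] at h ⊢
  exact lowerDensity_comp_eq_zero (fun i => ¬P i) hq hgap h

variable {P} {R : ℕ → Prop} [DecidablePred R]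

lemma count_le_of_near (hq : StrictMono q)
    (hnear : ∀ i, q 0 ≤ i → R i → ∃ k, P (q k) ∧ q k ≤ i + M ∧ i ≤ q k + M)
    (K : ℕ) :
    Nat.count R (q K) ≤ q 0 + (2 * M + 1) * (Nat.count (fun k => P (q k)) K + M) := by
  have hshift : Nat.count (fun k => P (q k)) (K + M) ≤ Nat.count (fun k => P (q k)) K + M := by
    rw [Nat.count_add]; exact Nat.add_le_add_left (Nat.count_le _) _
  refine le_trans ?_ (Nat.add_le_add_left (Nat.mul_le_mul_left _ hshift) _)
  simp only [Nat.count_eq_card_filter_range]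
  have hcover : {i ∈ Finset.range (q K) | R i} ⊆ Finset.range (q 0) ∪
      {k ∈ Finset.range (K + M) | P (q k)}.biUnion (fun k => Finset.Icc (q k - M) (q k + M)) := by
    intro i hi
    simp only [Finset.mem_filter, Finset.mem_range] at hi
    simp only [Finset.mem_union, Finset.mem_range, Finset.mem_biUnion, Finset.mem_filter,
      Finset.mem_Icc]
    by_cases hi0 : i < q 0
    · exact Or.inl hi0
    obtain ⟨k, hPk, hki, hik⟩ := hnear i (not_lt.1 hi0) hi.2
    have hqMK := hq.add_le_nat M K
    have hkK : k < M + K := hq.lt_iff_lt.1 (by omega)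
    exact Or.inr ⟨k, ⟨by omega, hPk⟩, by omega, by omega⟩
  calc _ ≤ _ := Finset.card_le_card hcover
    _ ≤ _ := Finset.card_union_le _ _
    _ ≤ q 0 + {k ∈ Finset.range (K + M) | P (q k)}.card * (2 * M + 1) := by
        rw [Finset.card_range]
        exact Nat.add_le_add_left (Finset.card_biUnion_le_card_mul _ _ _ fun k _ => by
          rw [Nat.card_Icc]; omega) _
    _ = _ := by rw [Nat.mul_comm]

lemma lowerDensity_eq_zero_of_near (hq : StrictMono q)
    (hnear : ∀ i, q 0 ≤ i → R i → ∃ k, P (q k) ∧ q k ≤ i + M ∧ i ≤ q k + M)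
    (h : lowerDensity (fun k => P (q k)) = 0) : lowerDensity R = 0 := by
  rw [lowerDensity_eq_zero_iff] at h ⊢
  intro η hη
  have hW : (0 : ℝ) < 2 * M + 1 := by positivity
  have hlarge : ∀ᶠ K : ℕ in atTop, 2 * (q 0 + (2 * M + 1) * M) / η < K :=
    tendsto_natCast_atTop_atTop.eventually_gt_atTop _
  refine hq.tendsto_atTop.frequently (((h (η / (2 * (2 * M + 1))) (by positivity)).and_eventually
    hlarge).mono fun K ⟨hK, hKlarge⟩ => ?_)
  have hcount : (Nat.count R (q K) : ℝ) ≤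
      q 0 + (2 * M + 1) * (Nat.count (fun k => P (q k)) K + M) := by
    exact_mod_cast count_le_of_near hq hnear K
  rw [div_lt_iff₀ hη] at hKlarge
  have hKq : (K : ℝ) ≤ q K := by exact_mod_cast hq.le_apply
  have hWK : (2 * M + 1) * (η / (2 * (2 * M + 1)) * K) = η / 2 * K := by field_simp
  nlinarith

lemma lowerDensity_eq_zero_of_window (hq : StrictMono q) (hgap : ∀ i, q (i + 1) ≤ q i + M)
    (hwin : ∀ i j, j ≤ M → R i → P (i + j)) (h : lowerDensity (fun k => P (q k)) = 0) :
    lowerDensity R = 0 := by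
  refine lowerDensity_eq_zero_of_near (M := M) hq (fun i hi hR => ?_) h
  obtain ⟨k, hki, hik⟩ := hq.exists_apply_le_lt_apply_succ hi
  have hgapk := hgap k
  refine ⟨k + 1, ?_, by omega, by omega⟩
  simpa [Nat.add_sub_cancel' hik.le] using hwin i (q (k + 1) - i) (by omega) hR

lemma upperDensity_eq_one_of_window (hq : StrictMono q) (hgap : ∀ i, q (i + 1) ≤ q i + M)
    (hwin : ∀ i j, j ≤ M → R i → P (i + j)) (h : upperDensity (fun k => R (q k)) = 1) :
    upperDensity P = 1 := by
  rw [upperDensity_eq_one_iff] at h ⊢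
  refine lowerDensity_eq_zero_of_near (M := M) (P := fun i => ¬R i) hq (fun i hi hP => ?_) h
  obtain ⟨k, hki, hik⟩ := hq.exists_apply_le_lt_apply_succ hi
  have hgapk := hgap k
  refine ⟨k, fun hR => hP ?_, by omega, by omega⟩
  simpa [Nat.add_sub_cancel' hki] using hwin (q k) (i - q k) (by omega) hR

end Subsequence

section Orbits

variable {X : Type*} [MetricSpace X]

-- An `abbrev`, so that its decidability instance is the one `ldens` uses.
abbrev OrbitsClose (f : X → X) (x y : X) (t : ℝ) (i : ℕ) : Prop :=
  dist (f^[i] x) (f^[i] y) < t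

lemma ldens_eq_lowerDensity (f : X → X) (x y : X) (t : ℝ) :
    ldens f x y t = lowerDensity (OrbitsClose f x y t) := by
  simp only [ldens, lowerDensity, Nat.count_eq_card_filter_range]

lemma udens_eq_upperDensity (f : X → X) (x y : X) (t : ℝ) :
    udens f x y t = upperDensity (OrbitsClose f x y t) := by
  simp only [udens, upperDensity, Nat.count_eq_card_filter_range]

lemma ldensSeq_eq_lowerDensity (f : X → X) (q : ℕ → ℕ) (x y : X) (t : ℝ) :
    ldensSeq f q x y t = lowerDensity (fun k => OrbitsClose f x y t (q k)) := by
  simp only [ldensSeq, lowerDensity, Nat.count_eq_card_filter_range]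

lemma udensSeq_eq_upperDensity (f : X → X) (q : ℕ → ℕ) (x y : X) (t : ℝ) :
    udensSeq f q x y t = upperDensity (fun k => OrbitsClose f x y t (q k)) := by
  simp only [udensSeq, upperDensity, Nat.count_eq_card_filter_range]

lemma exists_orbitsClose_add [CompactSpace X] {f : X → X} (hf : Continuous f) (M : ℕ)
    {t : ℝ} (ht : 0 < t) :
    ∃ δ > 0, ∀ x y : X, ∀ i j, j ≤ M →
      OrbitsClose f x y δ i → OrbitsClose f x y t (i + j) := by
  have hunif : UniformContinuous (fun (a : X) (j : Fin (M + 1)) => f^[j] a) :=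
    CompactSpace.uniformContinuous_of_continuous (continuous_pi fun j => hf.iterate j)
  obtain ⟨δ, hδ, hclose⟩ := Metric.uniformContinuous_iff.1 hunif t ht
  refine ⟨δ, hδ, fun x y i j hj hxy => ?_⟩
  rw [OrbitsClose, Nat.add_comm, Function.iterate_add_apply, Function.iterate_add_apply]
  exact (dist_le_pi_dist _ _ (⟨j, Nat.lt_succ_of_le hj⟩ : Fin (M + 1))).trans_lt (hclose hxy)

end Orbits

theorem stmt_4_general {X : Type*} [MetricSpace X] [CompactSpace X]
    (f : X → X) (hf : Continuous f)
    (q : ℕ → ℕ) (hq : StrictMono q)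
    (M : ℕ) (hgap : ∀ i, q (i + 1) - q i ≤ M) :
    DC1 f ↔ SDCin f q := by
  have hstep : ∀ i, q (i + 1) ≤ q i + M := fun i => by
    have := hq (Nat.lt_succ_self i); have := hgap i; omega
  simp only [DC1, SDCin, ldens_eq_lowerDensity, udens_eq_upperDensity, ldensSeq_eq_lowerDensity,
    udensSeq_eq_upperDensity]
  refine exists_congr fun S => and_congr_right fun _ => forall₂_congr fun x _ =>
    forall₂_congr fun y _ => imp_congr_right fun _ => ⟨?_, ?_⟩
  · rintro ⟨⟨ε, hε, hlow⟩, hup⟩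
    exact ⟨⟨ε, hε, lowerDensity_comp_eq_zero (OrbitsClose f x y ε) hq hstep hlow⟩,
      fun t ht => upperDensity_comp_eq_one (OrbitsClose f x y t) hq hstep (hup t ht)⟩
  · rintro ⟨⟨ε, hε, hlow⟩, hup⟩
    obtain ⟨δ, hδ, hwin⟩ := exists_orbitsClose_add hf M hε
    refine ⟨⟨δ, hδ, lowerDensity_eq_zero_of_window hq hstep (hwin x y) hlow⟩,
      fun t ht => ?_⟩
    obtain ⟨δ', hδ', hwin'⟩ := exists_orbitsClose_add hf M ht
    exact upperDensity_eq_one_of_window hq hstep (hwin' x y) (hup δ' hδ')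

theorem stmt_4 {X : Type*} [MetricSpace X] [CompactSpace X]
    (f : X → X) (hf : Continuous f)
    (q : ℕ → ℕ) (hq : StrictMono q) (hqpos : ∀ i, 0 < q i)
    (M : ℕ) (hgap : ∀ i, q (i + 1) - q i ≤ M) :
    DC1 f ↔ SDCin f q :=
  stmt_4_general f hf q hq M hgap
end

section
/- Let X be a compact metric space, f : X → X continuous, x, y ∈ X, and N a positive integer. If limsup_{n→∞} (1/n)#{0 ≤ i < n : d(f^i x, f^i y) < t} > 0 for every t > 0, then limsup_{n→∞} (1/n)#{0 ≤ i < n : d((f^N)^i x, (f^N)^i y) < s} > 0 for every s > 0. -/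
/-!
Choose `δ > 0` so that `dist a b < δ` keeps the first `N` iterates of `a` and `b` within `s`
(uniform continuity on a compact space). If time `i` is `δ`-close for `f`, then the next multiple
of `N` after `i`, namely `N * (i / N + 1)`, lies at most `N` steps later and is `s`-close, so
time `i / N + 1` is `s`-close for `f^[N]`. Each such time of `f^[N]` arises from at most `N`
times `i`, hence the upper density for `f^[N]` is at least `1 / (2N)` times that for `f`.
-/

open Filter Set
open scoped Classical

open Finset

theorem UniformContinuous.exists_forall_dist_iterate_lt {X : Type*} [PseudoMetricSpace X]
    {f : X → X} (hf : UniformContinuous f) (N : ℕ) {s : ℝ} (hs : 0 < s) :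
    ∃ δ > 0, ∀ a b : X, dist a b < δ → ∀ j ≤ N, dist (f^[j] a) (f^[j] b) < s := by
  have hev : ∀ᶠ p : X × X in uniformity X,
      ∀ j ∈ Finset.range (N + 1), dist (f^[j] p.1) (f^[j] p.2) < s :=
    (eventually_all_finset _).2 fun j _ =>
      UniformContinuous.iterate f j hf (Metric.dist_mem_uniformity hs)
  obtain ⟨δ, hδ, hclose⟩ := Metric.mem_uniformity_dist.1 hev
  exact ⟨δ, hδ, fun a b hab j hj => hclose hab j (Finset.mem_range.2 (Nat.lt_succ_of_le hj))⟩

theorem Function.iterate_iterate_div_add_one_apply {α : Type*} (f : α → α) {N : ℕ} (hN : 0 < N)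
    (i : ℕ) (x : α) : (f^[N])^[i / N + 1] x = f^[N - i % N] (f^[i] x) := by
  have hmod : i % N < N := Nat.mod_lt i hN
  have hdiv : N * (i / N) + i % N = i := Nat.div_add_mod i N
  rw [← Function.iterate_mul, ← Function.iterate_add_apply]
  congr 1
  rw [Nat.mul_succ]
  omega

theorem card_filter_div_add_one_eq_le {N : ℕ} (hN : 0 < N) (s : Finset ℕ) (k : ℕ) :
    #{i ∈ s | i / N + 1 = k} ≤ N := by
  calc #{i ∈ s | i / N + 1 = k}
      ≤ #(Ico ((k - 1) * N) ((k - 1) * N + N)) := by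
        refine card_le_card fun i hi => ?_
        have hq : i / N = k - 1 := by rw [← (mem_filter.1 hi).2, Nat.add_sub_cancel]
        have hlo := Nat.div_mul_le_self i N
        have hhi := Nat.lt_div_mul_add (a := i) hN
        rw [hq] at hlo hhi
        exact mem_Ico.2 ⟨hlo, hhi⟩
    _ = N := by simp

theorem card_filter_range_le_mul_card_filter_range_succ {N : ℕ} (hN : 0 < N)
    {P Q : ℕ → Prop} [DecidablePred P] [DecidablePred Q] (hPQ : ∀ i, P i → Q (i / N + 1))
    (n : ℕ) : #{i ∈ Finset.range n | P i} ≤ N * #{k ∈ Finset.range (n + 1) | Q k} := by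
  refine card_le_mul_card_image_of_maps_to (f := fun i => i / N + 1) (fun i hi => ?_) N
    fun k _ => card_filter_div_add_one_eq_le hN _ k
  obtain ⟨hin, hP⟩ := mem_filter.1 hi
  have := Nat.div_le_self i N
  exact mem_filter.2 ⟨Finset.mem_range.2 (by rw [Finset.mem_range] at hin; omega), hPQ i hP⟩

theorem limsup_card_div_le_mul_limsup_card_div {A B : ℕ → ℕ} {c : ℕ} (hB : ∀ n, B n ≤ n)
    (hAB : ∀ n, A n ≤ c * B (n + 1)) :
    limsup (fun n => (A n : ℝ) / n) atTop ≤ 2 * c * limsup (fun n => (B n : ℝ) / n) atTop := by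
  set b : ℕ → ℝ := fun n => (B n : ℝ) / n with hb
  have hb_nonneg : ∀ n, 0 ≤ b n := fun n => by positivity
  have hb_le_one : ∀ n, b n ≤ 1 := fun n =>
    div_le_one_of_le₀ (by exact_mod_cast hB n) n.cast_nonneg
  have hAb : ∀ n, (A n : ℝ) / n ≤ 2 * c * b (n + 1) := by
    intro n
    rcases Nat.eq_zero_or_pos n with rfl | hn
    · simpa using mul_nonneg (by positivity : (0 : ℝ) ≤ 2 * c) (hb_nonneg 1)
    -- `n + 1 ≤ 2 * n` absorbs the shift of the denominator
    have hcard : A n * (n + 1) ≤ 2 * c * B (n + 1) * n :=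
      calc A n * (n + 1) ≤ c * B (n + 1) * (2 * n) := Nat.mul_le_mul (hAB n) (by omega)
        _ = 2 * c * B (n + 1) * n := by ring
    rw [div_le_iff₀ (by positivity), hb, mul_div_assoc', div_mul_eq_mul_div,
      le_div_iff₀ (by positivity)]
    exact_mod_cast hcard
  calc limsup (fun n => (A n : ℝ) / n) atTop
      ≤ limsup (fun n => 2 * c * b (n + 1)) atTop :=
        limsup_le_limsup (Eventually.of_forall hAb)
          (isBoundedUnder_of ⟨0, fun n => by positivity⟩).isCoboundedUnder_le
          (isBoundedUnder_of ⟨2 * c * 1, fun n => by gcongr; exact hb_le_one _⟩)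
    _ = 2 * c * limsup (fun n => b (n + 1)) atTop :=
        ((monotone_mul_left_of_nonneg (by positivity)).map_limsup_of_continuousAt _
          (continuous_const_mul _).continuousAt
          (isBoundedUnder_of ⟨1, fun n => hb_le_one _⟩)
          (isBoundedUnder_of ⟨0, fun n => hb_nonneg _⟩).isCoboundedUnder_le).symm
    _ = 2 * c * limsup b atTop := by rw [limsup_nat_add b 1]

theorem stmt_5 {X : Type*} [MetricSpace X] [CompactSpace X]
    (f : X → X) (hf : Continuous f) (x y : X) (N : ℕ) (hN : 0 < N)
    (h : ∀ t : ℝ, 0 < t → 0 < udens f x y t) :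
    ∀ s : ℝ, 0 < s → 0 < udens (f^[N]) x y s := by
  intro s hs
  obtain ⟨δ, hδ, hclose⟩ :=
    (CompactSpace.uniformContinuous_of_continuous hf).exists_forall_dist_iterate_lt N hs
  have hcard := card_filter_range_le_mul_card_filter_range_succ hN
    (P := fun i => dist (f^[i] x) (f^[i] y) < δ)
    (Q := fun k => dist ((f^[N])^[k] x) ((f^[N])^[k] y) < s) fun i hi => by
      simp only [Function.iterate_iterate_div_add_one_apply f hN]
      exact hclose _ _ hi _ (Nat.sub_le _ _)
  have hdens : udens f x y δ ≤ 2 * N * udens (f^[N]) x y s :=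
    limsup_card_div_le_mul_limsup_card_div (fun n => (card_filter_le _ _).trans (card_range n).le)
      hcard
  exact pos_of_mul_pos_right ((h δ hδ).trans_le hdens) (by positivity)
end

section
/- Let X be a compact metric space, f : X → X continuous, x, y ∈ X, N > 0, and t > 0. If liminf_{n→∞} (1/n)#{0 ≤ i < n : d(f^i x, f^i y) < t} = 0, then liminf_{n→∞} (1/n)#{0 ≤ i < n : d((f^N)^i x, (f^N)^i y) < t} = 0. -/
open Filter Set
open scoped Classical

/-!
The close times of `f^[N]` below `n` are the close times of `f` at multiples of `N` below `N * n`.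
Taking `n = m / N + 1`, so that `m ≤ N * n ≤ m + N`, their number is at most the number of close
times of `f` below `m` plus `N`, hence the density of `f^[N]` at `n` is at most `N` times the density
of `f` at `m` plus `N² / m`. Along times `m` where the density of `f` is small, so is that of `f^[N]`.
-/

open Finset

section RangeDensity

variable (p : ℕ → Prop) [DecidablePred p]

noncomputable def rangeDensity (n : ℕ) : ℝ := #{i ∈ range n | p i} / n

theorem card_filter_range_le_card_filter_range_add {m m' : ℕ} (h : m ≤ m') :
    #{i ∈ range m' | p i} ≤ #{i ∈ range m | p i} + (m' - m) := by
  rw [range_eq_Ico, range_eq_Ico, ← Finset.Ico_union_Ico_eq_Ico (Nat.zero_le m) h, filter_union]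
  calc #({i ∈ Finset.Ico 0 m | p i} ∪ {i ∈ Finset.Ico m m' | p i})
      ≤ #{i ∈ Finset.Ico 0 m | p i} + #{i ∈ Finset.Ico m m' | p i} := card_union_le _ _
    _ ≤ #{i ∈ Finset.Ico 0 m | p i} + (m' - m) := by
      gcongr
      exact (card_filter_le _ _).trans (Nat.card_Ico m m').le

theorem card_filter_range_mul_le {N : ℕ} (hN : 0 < N) (n : ℕ) :
    #{i ∈ range n | p (N * i)} ≤ #{i ∈ range (N * n) | p i} := by
  refine card_le_card_of_injOn (N * ·) (fun i hi => ?_) fun i _ j _ hij => ?_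
  · simp only [coe_filter, Finset.mem_range, Set.mem_ofPred_eq] at hi ⊢
    exact ⟨Nat.mul_lt_mul_of_pos_left hi.1 hN, hi.2⟩
  · exact Nat.eq_of_mul_eq_mul_left hN hij

theorem rangeDensity_nonneg (n : ℕ) : 0 ≤ rangeDensity p n := by
  unfold rangeDensity
  positivity

theorem rangeDensity_le_one (n : ℕ) : rangeDensity p n ≤ 1 :=
  div_le_one_of_le₀ (by exact_mod_cast (card_filter_le _ _).trans (card_range n).le) n.cast_nonneg

theorem liminf_rangeDensity_eq_zero_iff :
    liminf (rangeDensity p) atTop = 0 ↔ ∀ ε > 0, ∃ᶠ n in atTop, rangeDensity p n < ε := by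
  have hbdd : IsBoundedUnder (· ≤ ·) atTop (rangeDensity p) :=
    isBoundedUnder_of ⟨1, rangeDensity_le_one p⟩
  have hbdd' : IsBoundedUnder (· ≥ ·) atTop (rangeDensity p) :=
    isBoundedUnder_of ⟨0, rangeDensity_nonneg p⟩
  rw [← liminf_le_iff hbdd.isCoboundedUnder_ge hbdd']
  exact ⟨le_of_eq, fun h => h.antisymm
    (le_liminf_of_le hbdd.isCoboundedUnder_ge (.of_forall (rangeDensity_nonneg p)))⟩

theorem rangeDensity_comp_mul_le {N m : ℕ} (hN : 0 < N) (hm : 0 < m) :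
    rangeDensity (fun i => p (N * i)) (m / N + 1) ≤ N * rangeDensity p m + N ^ 2 / m := by
  set n := m / N + 1
  have hm_le : m ≤ N * n := (Nat.lt_mul_div_succ m hN).le
  have hcount : #{i ∈ range n | p (N * i)} ≤ #{i ∈ range m | p i} + N :=
    calc #{i ∈ range n | p (N * i)} ≤ #{i ∈ range (N * n) | p i} := card_filter_range_mul_le p hN n
      _ ≤ #{i ∈ range m | p i} + (N * n - m) := card_filter_range_le_card_filter_range_add p hm_le
      _ ≤ #{i ∈ range m | p i} + N := by
        have := Nat.mul_div_le m N
        simp only [n, Nat.mul_succ]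
        omega
  have hmR : (0 : ℝ) < m := by exact_mod_cast hm
  have hNR : (0 : ℝ) < N := by exact_mod_cast hN
  calc rangeDensity (fun i => p (N * i)) n
      ≤ (#{i ∈ range m | p i} + N) / ((m : ℝ) / N) := by
        unfold rangeDensity
        gcongr
        · exact_mod_cast hcount
        · rw [div_le_iff₀ hNR, mul_comm]
          exact_mod_cast hm_le
    _ = N * rangeDensity p m + N ^ 2 / m := by
        unfold rangeDensity
        field_simp

theorem liminf_rangeDensity_comp_mul_eq_zero {N : ℕ} (hN : 0 < N)
    (h : liminf (rangeDensity p) atTop = 0) :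
    liminf (rangeDensity fun i => p (N * i)) atTop = 0 := by
  rw [liminf_rangeDensity_eq_zero_iff] at h ⊢
  intro ε hε
  have hNR : (0 : ℝ) < N := by exact_mod_cast hN
  have hsmall : ∀ᶠ m : ℕ in atTop, 0 < m ∧ (N : ℝ) ^ 2 / m < ε / 2 :=
    (eventually_gt_atTop 0).and <|
      (tendsto_const_div_atTop_nhds_zero_nat _).eventually (gt_mem_nhds (half_pos hε))
  have hshift : Tendsto (fun m => m / N + 1) atTop atTop :=
    (tendsto_add_atTop_nat 1).comp (Nat.tendsto_div_const_atTop hN.ne')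
  refine hshift.frequently ((h _ (div_pos hε (mul_pos two_pos hNR))).and_eventually hsmall |>.mono ?_)
  rintro m ⟨hdens, hm, hrem⟩
  calc rangeDensity (fun i => p (N * i)) (m / N + 1)
      ≤ N * rangeDensity p m + N ^ 2 / m := rangeDensity_comp_mul_le p hN hm
    _ < N * (ε / (2 * N)) + ε / 2 := by gcongr
    _ = ε := by field_simp; ring

end RangeDensity

theorem ldens_eq_liminf_rangeDensity {X : Type*} [MetricSpace X] (f : X → X) (x y : X) (t : ℝ) :
    ldens f x y t = liminf (rangeDensity fun i => dist (f^[i] x) (f^[i] y) < t) atTop :=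
  rfl

theorem stmt_7_general {X : Type*} [MetricSpace X]
    (f : X → X) (x y : X) (N : ℕ) (hN : 0 < N)
    (t : ℝ) (h : ldens f x y t = 0) :
    ldens (f^[N]) x y t = 0 := by
  rw [ldens_eq_liminf_rangeDensity] at h ⊢
  convert liminf_rangeDensity_comp_mul_eq_zero _ hN h using 6 <;> rw [Function.iterate_mul]

theorem stmt_7 {X : Type*} [MetricSpace X] [CompactSpace X]
    (f : X → X) (hf : Continuous f) (x y : X) (N : ℕ) (hN : 0 < N)
    (t : ℝ) (ht : 0 < t) (h : ldens f x y t = 0) :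
    ldens (f^[N]) x y t = 0 :=
  stmt_7_general f x y N hN t h
end

section
/- Let X be a compact metric space and f : X → X continuous. For any positive integer N, f is DC2' if and only if f^N is DC2'. -/
open Filter Set
open scoped Classical

/-- f is DC2'. -/
def DC2' {X : Type*} [MetricSpace X] (f : X → X) : Prop :=
  ∃ S : Set X, ¬ S.Countable ∧ ∀ x ∈ S, ∀ y ∈ S, x ≠ y →
    (∃ ε : ℝ, 0 < ε ∧ ldens f x y ε = 0) ∧ ∀ t : ℝ, 0 < t → 0 < udens f x y t

/-!
Fix a pair `x, y` and a threshold. The times `j` at which the `f^N`-orbits are close are the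
times `N * j` at which the `f`-orbits are close, so rescaling time bounds the densities for `f^N`
by constant multiples of those for `f` at the same threshold. Conversely, `f, f^2, …, f^N` are
uniformly equicontinuous on the compact space, so for every `ε` there is `δ` such that each time
`i` at which the `f`-orbits are `δ`-close is followed, within `N` steps, by a multiple `N * j` at
which they are `ε`-close; at most `N` such `i` share the same `j`, which bounds the `δ`-densities
for `f` by constant multiples of the `ε`-densities for `f^N`. Both clauses of DC2' only ask
whether a density vanishes or is positive, so the same uncountable set works for `f` and `f^N`.
-/

section LimsupLiminf

variable {u v : ℕ → ℝ} {m : ℕ → ℕ} {C : ℝ}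

theorem limsup_le_mul_limsup_of_le_comp (hC : 0 ≤ C) (hm : Tendsto m atTop atTop)
    (hu : 0 ≤ u) (hv₀ : 0 ≤ v) (hv₁ : v ≤ 1) (h : ∀ᶠ n in atTop, u n ≤ C * v (m n)) :
    limsup u atTop ≤ C * limsup v atTop := by
  have hvm : limsup (v ∘ m) atTop ≤ limsup v atTop :=
    hm.limsup_comp_le_limsup (isCoboundedUnder_le_of_le _ hv₀)
      (isBoundedUnder_of ⟨1, hv₁⟩)
  calc limsup u atTop
      ≤ limsup (fun n => C * v (m n)) atTop :=
        limsup_le_limsup h (isCoboundedUnder_le_of_le _ hu)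
          (isBoundedUnder_of ⟨C * 1, fun n => mul_le_mul_of_nonneg_left (hv₁ _) hC⟩)
    _ = C * limsup (v ∘ m) atTop :=
        ((monotone_mul_left_of_nonneg hC).map_limsup_of_continuousAt (v ∘ m)
          (continuous_const_mul C).continuousAt (isBoundedUnder_of ⟨1, fun n => hv₁ _⟩)
          (isCoboundedUnder_le_of_le _ fun n => hv₀ (m n))).symm
    _ ≤ C * limsup v atTop := mul_le_mul_of_nonneg_left hvm hC

theorem liminf_le_mul_liminf_of_comp_le (hC : 0 ≤ C) (hm : Tendsto m atTop atTop)
    (hu₀ : 0 ≤ u) (hu₁ : u ≤ 1) (hv₀ : 0 ≤ v) (hv₁ : v ≤ 1)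
    (h : ∀ᶠ k in atTop, v (m k) ≤ C * u k) :
    liminf v atTop ≤ C * liminf u atTop := by
  calc liminf v atTop
      ≤ liminf (v ∘ m) atTop :=
        hm.liminf_le_liminf_comp (isCoboundedUnder_ge_of_le _ hv₁)
          (isBoundedUnder_of ⟨0, hv₀⟩)
    _ ≤ liminf (fun k => C * u k) atTop :=
        liminf_le_liminf h (isBoundedUnder_of ⟨0, fun n => hv₀ _⟩)
          (isCoboundedUnder_ge_of_le _ fun n => mul_le_mul_of_nonneg_left (hu₁ n) hC)
    _ = C * liminf u atTop :=
        ((monotone_mul_left_of_nonneg hC).map_liminf_of_continuousAt u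
          (continuous_const_mul C).continuousAt (isCoboundedUnder_ge_of_le _ hu₁)
          (isBoundedUnder_of ⟨0, hu₀⟩)).symm

end LimsupLiminf

section RelFreq

open Finset

noncomputable def relFreq (E : ℕ → Prop) (n : ℕ) : ℝ :=
  #{i ∈ range n | E i} / n

variable (E : ℕ → Prop) {N : ℕ}

theorem relFreq_nonneg : 0 ≤ relFreq E := fun n => by
  unfold relFreq
  positivity

theorem relFreq_le_one : relFreq E ≤ 1 := fun n =>
  div_le_one_of_le₀ (Nat.cast_le.2 ((card_filter_le _ _).trans (card_range n).le))
    n.cast_nonneg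

theorem relFreq_le_mul_relFreq {m n : ℕ} {C : ℝ} (hmn : m ≤ n) (hnm : (n : ℝ) ≤ C * m) :
    relFreq E m ≤ C * relFreq E n := by
  rcases m.eq_zero_or_pos with rfl | hm
  · obtain rfl : n = 0 := by exact_mod_cast le_antisymm (by simpa using hnm) n.cast_nonneg
    simp [relFreq]
  have hm' : (0 : ℝ) < m := Nat.cast_pos.2 hm
  have hn : (0 : ℝ) < n := Nat.cast_pos.2 (hm.trans_le hmn)
  unfold relFreq
  calc (#{i ∈ range m | E i} : ℝ) / m ≤ #{i ∈ range n | E i} / m := by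
        gcongr
    _ = n / m * (#{i ∈ range n | E i} / n) := by field_simp
    _ ≤ C * (#{i ∈ range n | E i} / n) := by
        gcongr
        rwa [div_le_iff₀ hm']

theorem card_filter_range_comp_mul_le (hN : 0 < N) (n : ℕ) :
    #{j ∈ range n | E (N * j)} ≤ #{i ∈ range (N * n) | E i} :=
  card_le_card_of_injOn (N * ·) (fun j hj => by
      simp only [mem_coe, mem_filter, Finset.mem_range] at hj ⊢
      exact ⟨Nat.mul_lt_mul_of_pos_left hj.1 hN, hj.2⟩)
    fun _ _ _ _ h => Nat.eq_of_mul_eq_mul_left hN h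

theorem card_filter_range_mul_le_of_next_multiple {D : ℕ → Prop} (hN : 0 < N)
    (hDE : ∀ i, D i → E (N * (i / N + 1))) (k : ℕ) :
    #{i ∈ range (N * k) | D i} ≤ N * #{j ∈ range (k + 1) | E (N * j)} := by
  calc #{i ∈ range (N * k) | D i}
      ≤ #({j ∈ range (k + 1) | E (N * j)} ×ˢ range N) := by
        refine card_le_card_of_injOn (fun i => (i / N + 1, i % N)) (fun i hi => ?_)
          fun a _ b _ hab => ?_
        · simp only [mem_coe, mem_filter, mem_product, Finset.mem_range] at hi ⊢
          have : i / N < k := (Nat.div_lt_iff_lt_mul hN).2 (mul_comm N k ▸ hi.1)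
          exact ⟨⟨by omega, hDE i hi.2⟩, Nat.mod_lt i hN⟩
        · simp only [Prod.mk.injEq, add_left_inj] at hab
          rw [← Nat.div_add_mod a N, ← Nat.div_add_mod b N, hab.1, hab.2]
    _ = N * #{j ∈ range (k + 1) | E (N * j)} := by rw [card_product, card_range, mul_comm]

theorem relFreq_comp_mul_le (hN : 0 < N) (n : ℕ) :
    relFreq (fun j => E (N * j)) n ≤ N * relFreq E (N * n) := by
  unfold relFreq
  rw [Nat.cast_mul, mul_div_assoc', mul_div_mul_left _ _ (by positivity)]
  exact div_le_div_of_nonneg_right (by exact_mod_cast card_filter_range_comp_mul_le E hN n)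
    n.cast_nonneg

theorem relFreq_mul_le_of_next_multiple {D : ℕ → Prop} (hN : 0 < N)
    (hDE : ∀ i, D i → E (N * (i / N + 1))) {k : ℕ} (hk : 0 < k) :
    relFreq D (N * k) ≤ 2 * relFreq (fun j => E (N * j)) (k + 1) := by
  have hk' : (0 : ℝ) < k := Nat.cast_pos.2 hk
  unfold relFreq
  calc (#{i ∈ range (N * k) | D i} : ℝ) / ↑(N * k)
      ≤ N * #{j ∈ range (k + 1) | E (N * j)} / (N * k) := by
        push_cast
        gcongr
        exact_mod_cast card_filter_range_mul_le_of_next_multiple E hN hDE k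
    _ = (k + 1) / k * (#{j ∈ range (k + 1) | E (N * j)} / ↑(k + 1)) := by
        field_simp
        push_cast
        ring
    _ ≤ 2 * (#{j ∈ range (k + 1) | E (N * j)} / ↑(k + 1)) := by
        gcongr
        rw [div_le_iff₀ hk']
        linarith [(Nat.one_le_cast (α := ℝ)).2 hk]

end RelFreq

section Dynamics

variable {X : Type*} [MetricSpace X] (f : X → X) (x y : X) {N : ℕ} {δ ε : ℝ}

-- `ldens` and `udens` decide `dist … < t` by the instance on `ℝ`, `relFreq` classically.
theorem ldens_eq (t : ℝ) :
    ldens f x y t = liminf (relFreq fun i => dist (f^[i] x) (f^[i] y) < t) atTop := by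
  unfold ldens relFreq
  congr!

theorem udens_eq (t : ℝ) :
    udens f x y t = limsup (relFreq fun i => dist (f^[i] x) (f^[i] y) < t) atTop := by
  unfold udens relFreq
  congr!

theorem ldens_nonneg (t : ℝ) : 0 ≤ ldens f x y t :=
  le_liminf_of_le (isCoboundedUnder_ge_of_le _ (relFreq_le_one _))
    (Eventually.of_forall (relFreq_nonneg _))

theorem udens_iterate_le (hN : 0 < N) (t : ℝ) : udens (f^[N]) x y t ≤ N * udens f x y t := by
  rw [udens_eq, udens_eq]
  simp only [← Function.iterate_mul]
  exact limsup_le_mul_limsup_of_le_comp (m := (N * ·)) N.cast_nonneg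
    (tendsto_id.const_mul_atTop' hN) (relFreq_nonneg _) (relFreq_nonneg _) (relFreq_le_one _)
    (Eventually.of_forall (relFreq_comp_mul_le (fun i => dist (f^[i] x) (f^[i] y) < t) hN))

theorem ldens_iterate_le (hN : 0 < N) (t : ℝ) : ldens (f^[N]) x y t ≤ N * 2 * ldens f x y t := by
  rw [ldens_eq, ldens_eq]
  simp only [← Function.iterate_mul]
  refine liminf_le_mul_liminf_of_comp_le (by positivity) (Nat.tendsto_div_const_atTop hN.ne')
    (relFreq_nonneg _) (relFreq_le_one _) (relFreq_nonneg _) (relFreq_le_one _) ?_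
  filter_upwards [eventually_ge_atTop N] with k hk
  have hmul : N ≤ N * (k / N) := Nat.le_mul_of_pos_right N (Nat.div_pos hk hN)
  have hlt : k < N * (k / N + 1) := Nat.lt_mul_div_succ k hN
  rw [mul_assoc]
  refine (relFreq_comp_mul_le (fun i => dist (f^[i] x) (f^[i] y) < t) hN _).trans
    (mul_le_mul_of_nonneg_left ?_ N.cast_nonneg)
  exact relFreq_le_mul_relFreq _ (Nat.mul_div_le k N) (by norm_cast; linarith)

theorem dist_iterate_next_multiple_lt (hN : 0 < N)
    (hδ : ∀ a b : X, dist a b < δ → ∀ j ≤ N, dist (f^[j] a) (f^[j] b) < ε) {i : ℕ}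
    (hi : dist (f^[i] x) (f^[i] y) < δ) :
    dist (f^[N * (i / N + 1)] x) (f^[N * (i / N + 1)] y) < ε := by
  have hsplit : N * (i / N + 1) = (N - i % N) + i := by
    have := Nat.div_add_mod i N
    have := Nat.mod_lt i hN
    rw [Nat.mul_add_one]
    omega
  simp only [hsplit, Function.iterate_add_apply]
  exact hδ _ _ hi _ (Nat.sub_le N _)

theorem udens_le_udens_iterate (hN : 0 < N)
    (hδ : ∀ a b : X, dist a b < δ → ∀ j ≤ N, dist (f^[j] a) (f^[j] b) < ε) :
    udens f x y δ ≤ 2 * 2 * udens (f^[N]) x y ε := by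
  rw [udens_eq, udens_eq]
  simp only [← Function.iterate_mul]
  refine limsup_le_mul_limsup_of_le_comp (by norm_num)
    (tendsto_atTop_mono (fun n => Nat.le_add_right _ 2) (Nat.tendsto_div_const_atTop hN.ne'))
    (relFreq_nonneg _) (relFreq_nonneg _) (relFreq_le_one _) ?_
  filter_upwards [eventually_ge_atTop N] with n hn
  have hle : n ≤ N * (n / N + 1) := (Nat.lt_mul_div_succ n hN).le
  have hmul : N * (n / N + 1) ≤ 2 * n := by
    rw [Nat.mul_add_one]
    linarith [Nat.mul_div_le n N]
  rw [mul_assoc]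
  refine (relFreq_le_mul_relFreq _ hle (by exact_mod_cast hmul)).trans
    (mul_le_mul_of_nonneg_left ?_ zero_le_two)
  exact relFreq_mul_le_of_next_multiple (fun i => dist (f^[i] x) (f^[i] y) < ε) hN
    (fun i => dist_iterate_next_multiple_lt f x y hN hδ) (Nat.succ_pos _)

theorem ldens_le_ldens_iterate (hN : 0 < N)
    (hδ : ∀ a b : X, dist a b < δ → ∀ j ≤ N, dist (f^[j] a) (f^[j] b) < ε) :
    ldens f x y δ ≤ 2 * ldens (f^[N]) x y ε := by
  rw [ldens_eq, ldens_eq]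
  simp only [← Function.iterate_mul]
  refine liminf_le_mul_liminf_of_comp_le (m := fun k => N * (k - 1)) zero_le_two
    ((tendsto_sub_atTop_nat 1).const_mul_atTop' hN)
    (relFreq_nonneg _) (relFreq_le_one _) (relFreq_nonneg _) (relFreq_le_one _) ?_
  filter_upwards [eventually_ge_atTop 2] with k hk
  have := relFreq_mul_le_of_next_multiple (fun i => dist (f^[i] x) (f^[i] y) < ε) hN
    (fun i => dist_iterate_next_multiple_lt f x y hN hδ) (k := k - 1) (by omega)
  rwa [Nat.sub_add_cancel (by omega : 1 ≤ k)] at this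

theorem exists_dist_iterate_lt [CompactSpace X] (hf : Continuous f) (N : ℕ) (hε : 0 < ε) :
    ∃ δ > 0, ∀ a b : X, dist a b < δ → ∀ j ≤ N, dist (f^[j] a) (f^[j] b) < ε := by
  have hF : UniformContinuous fun a (j : Fin (N + 1)) => f^[j] a :=
    uniformContinuous_pi.2 fun j => CompactSpace.uniformContinuous_of_continuous (hf.iterate j)
  obtain ⟨δ, hδ, H⟩ := Metric.uniformContinuous_iff.1 hF ε hε
  exact ⟨δ, hδ, fun a b hab j hj => (dist_pi_lt_iff hε).1 (H hab) ⟨j, Nat.lt_succ_of_le hj⟩⟩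

end Dynamics

theorem stmt_9 {X : Type*} [MetricSpace X] [CompactSpace X]
    (f : X → X) (hf : Continuous f) (N : ℕ) (hN : 0 < N) :
    DC2' f ↔ DC2' (f^[N]) := by
  constructor
  · rintro ⟨S, hS, hpair⟩
    refine ⟨S, hS, fun x hx y hy hxy => ?_⟩
    obtain ⟨⟨ε, hε, hl⟩, hu⟩ := hpair x hx y hy hxy
    refine ⟨⟨ε, hε, le_antisymm ?_ (ldens_nonneg _ x y ε)⟩, fun t ht => ?_⟩
    · simpa [hl] using ldens_iterate_le f x y hN ε
    · obtain ⟨δ, hδ, hδN⟩ := exists_dist_iterate_lt f hf N ht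
      linarith [hu δ hδ, udens_le_udens_iterate f x y hN hδN]
  · rintro ⟨S, hS, hpair⟩
    refine ⟨S, hS, fun x hx y hy hxy => ?_⟩
    obtain ⟨⟨ε, hε, hl⟩, hu⟩ := hpair x hx y hy hxy
    obtain ⟨δ, hδ, hδN⟩ := exists_dist_iterate_lt f hf N hε
    refine ⟨⟨δ, hδ, le_antisymm ?_ (ldens_nonneg f x y δ)⟩, fun t ht => ?_⟩
    · simpa [hl] using ldens_le_ldens_iterate f x y hN hδN
    · exact pos_of_mul_pos_right ((hu t ht).trans_le (udens_iterate_le f x y hN t))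
        N.cast_nonneg
end

section
/- Define d : [0,∞) × [0,∞) → [0,1] by d(x,y) = 0 if x = y; d(x,y) = 1/2^k if x ≠ y, ⌊x⌋ = ⌊y⌋ is even, and x, y ∈ [L_{2k}, L_{2k+1}) where L_m = b_1 + ... + b_m with b_1 = 1 and b_i = 2^{b_1+...+b_{i-1}}; and d(x,y) = 1 otherwise. Then d is a metric on [0,∞). -/
open Filter Set
open scoped Classical

/-- `Lseq m = b₁ + ⋯ + b_m` where `b₁ = 1`, `b_i = 2^(b₁+⋯+b_{i-1})`;
equivalently `Lseq 0 = 0`, `Lseq (m+1) = Lseq m + 2 ^ Lseq m`. -/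
def Lseq : ℕ → ℕ
  | 0 => 0
  | m + 1 => Lseq m + 2 ^ Lseq m

/-- `bseq i = 2 ^ (L_{i-1})`, so `bseq 1 = 1`. -/
def bseq (i : ℕ) : ℕ := 2 ^ Lseq (i - 1)

/-- The three-valued distance of Example 1. -/
noncomputable def D (x y : ℝ) : ℝ :=
  if x = y then 0
  else if h : ∃ k : ℕ, ⌊x⌋ = ⌊y⌋ ∧ Even ⌊x⌋ ∧
      x ∈ Set.Ico ((Lseq (2 * k) : ℝ)) ((Lseq (2 * k + 1) : ℝ)) ∧
      y ∈ Set.Ico ((Lseq (2 * k) : ℝ)) ((Lseq (2 * k + 1) : ℝ))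
  then (1 / 2 : ℝ) ^ h.choose else 1

lemma Lseq_strictMono : StrictMono Lseq := by
  apply strictMono_nat_of_lt_succ
  intro n
  have : 0 < 2 ^ Lseq n := pow_pos (by norm_num) _
  show Lseq n < Lseq n + 2 ^ Lseq n
  omega

lemma interval_uniq {x : ℝ} {j k : ℕ}
    (hj : x ∈ Set.Ico ((Lseq (2 * j) : ℝ)) ((Lseq (2 * j + 1) : ℝ)))
    (hk : x ∈ Set.Ico ((Lseq (2 * k) : ℝ)) ((Lseq (2 * k + 1) : ℝ))) : j = k := by
  by_contra h
  rcases Nat.lt_or_ge j k with hlt | hge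
  · have h1 : 2 * j + 1 ≤ 2 * k := by omega
    have h2 : (Lseq (2 * j + 1) : ℝ) ≤ (Lseq (2 * k) : ℝ) := by
      exact_mod_cast Lseq_strictMono.monotone h1
    linarith [hj.2, hk.1]
  · have hlt : k < j := lt_of_le_of_ne hge (Ne.symm h)
    have h1 : 2 * k + 1 ≤ 2 * j := by omega
    have h2 : (Lseq (2 * k + 1) : ℝ) ≤ (Lseq (2 * j) : ℝ) := by
      exact_mod_cast Lseq_strictMono.monotone h1
    linarith [hk.2, hj.1]

lemma D_self (x : ℝ) : D x x = 0 := by simp [D]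

lemma D_nonneg (x y : ℝ) : 0 ≤ D x y := by
  rw [D]
  split_ifs
  · exact le_refl 0
  · positivity
  · norm_num

lemma D_le_one (x y : ℝ) : D x y ≤ 1 := by
  rw [D]
  split_ifs
  · norm_num
  · exact pow_le_one₀ (by norm_num) (by norm_num)
  · exact le_refl 1

theorem stmt_13 :
    (∀ x : ℝ, 0 ≤ x → D x x = 0) ∧
    (∀ x y : ℝ, 0 ≤ x → 0 ≤ y → D x y = D y x) ∧
    (∀ x y : ℝ, 0 ≤ x → 0 ≤ y → D x y = 0 → x = y) ∧
    (∀ x y z : ℝ, 0 ≤ x → 0 ≤ y → 0 ≤ z → D x z ≤ D x y + D y z) := by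
  refine ⟨fun x _ => D_self x, ?_, ?_, ?_⟩
  · -- symmetry
    intro x y _ _
    by_cases hxy : x = y
    · subst hxy; rfl
    rw [D, D, if_neg hxy, if_neg (Ne.symm hxy)]
    by_cases h : ∃ k : ℕ, ⌊x⌋ = ⌊y⌋ ∧ Even ⌊x⌋ ∧
        x ∈ Set.Ico ((Lseq (2 * k) : ℝ)) ((Lseq (2 * k + 1) : ℝ)) ∧
        y ∈ Set.Ico ((Lseq (2 * k) : ℝ)) ((Lseq (2 * k + 1) : ℝ))
    · have h' : ∃ k : ℕ, ⌊y⌋ = ⌊x⌋ ∧ Even ⌊y⌋ ∧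
        y ∈ Set.Ico ((Lseq (2 * k) : ℝ)) ((Lseq (2 * k + 1) : ℝ)) ∧
        x ∈ Set.Ico ((Lseq (2 * k) : ℝ)) ((Lseq (2 * k + 1) : ℝ)) := by
        obtain ⟨k, h1, h2, h3, h4⟩ := h
        exact ⟨k, h1.symm, h1 ▸ h2, h4, h3⟩
      rw [dif_pos h, dif_pos h']
      have e : h.choose = h'.choose :=
        interval_uniq h.choose_spec.2.2.1 h'.choose_spec.2.2.2
      rw [e]
    · have h' : ¬ ∃ k : ℕ, ⌊y⌋ = ⌊x⌋ ∧ Even ⌊y⌋ ∧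
        y ∈ Set.Ico ((Lseq (2 * k) : ℝ)) ((Lseq (2 * k + 1) : ℝ)) ∧
        x ∈ Set.Ico ((Lseq (2 * k) : ℝ)) ((Lseq (2 * k + 1) : ℝ)) := by
        rintro ⟨k, h1, h2, h3, h4⟩
        exact h ⟨k, h1.symm, h1 ▸ h2, h4, h3⟩
      rw [dif_neg h, dif_neg h']
  · -- D x y = 0 → x = y
    intro x y _ _ h0
    by_contra hxy
    rw [D, if_neg hxy] at h0
    split_ifs at h0 with h
    · have : (0:ℝ) < (1/2:ℝ) ^ h.choose := by positivity
      linarith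
    · norm_num at h0
  · -- triangle
    intro x y z _ _ _
    by_cases hxz : x = z
    · subst hxz; rw [D_self]; exact add_nonneg (D_nonneg _ _) (D_nonneg _ _)
    by_cases hxy : x = y
    · subst hxy; rw [D_self, zero_add]
    by_cases hyz : y = z
    · subst hyz; rw [D_self, add_zero]
    by_cases h1 : ∃ k : ℕ, ⌊x⌋ = ⌊y⌋ ∧ Even ⌊x⌋ ∧
        x ∈ Set.Ico ((Lseq (2 * k) : ℝ)) ((Lseq (2 * k + 1) : ℝ)) ∧
        y ∈ Set.Ico ((Lseq (2 * k) : ℝ)) ((Lseq (2 * k + 1) : ℝ))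
    · by_cases h2 : ∃ k : ℕ, ⌊y⌋ = ⌊z⌋ ∧ Even ⌊y⌋ ∧
          y ∈ Set.Ico ((Lseq (2 * k) : ℝ)) ((Lseq (2 * k + 1) : ℝ)) ∧
          z ∈ Set.Ico ((Lseq (2 * k) : ℝ)) ((Lseq (2 * k + 1) : ℝ))
      · -- both powers with same exponent
        obtain ⟨e1, e2, e3, e4⟩ := h1.choose_spec
        obtain ⟨f1, f2, f3, f4⟩ := h2.choose_spec
        have ekk : h1.choose = h2.choose := interval_uniq e4 f3
        have h3 : ∃ k : ℕ, ⌊x⌋ = ⌊z⌋ ∧ Even ⌊x⌋ ∧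
            x ∈ Set.Ico ((Lseq (2 * k) : ℝ)) ((Lseq (2 * k + 1) : ℝ)) ∧
            z ∈ Set.Ico ((Lseq (2 * k) : ℝ)) ((Lseq (2 * k + 1) : ℝ)) :=
          ⟨h1.choose, e1.trans f1, e2, e3, ekk ▸ f4⟩
        rw [D, D, D, if_neg hxz, if_neg hxy, if_neg hyz,
          dif_pos h1, dif_pos h2, dif_pos h3]
        obtain ⟨g1, g2, g3, g4⟩ := h3.choose_spec
        have e31 : h3.choose = h1.choose := interval_uniq g3 e3
        rw [e31, ← ekk]
        have : (0:ℝ) ≤ (1/2:ℝ) ^ h1.choose := by positivity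
        linarith
      · -- D y z = 1
        have hv : D y z = 1 := by rw [D, if_neg hyz, dif_neg h2]
        rw [hv]
        linarith [D_le_one x z, D_nonneg x y]
    · -- D x y = 1
      have hv : D x y = 1 := by rw [D, if_neg hxy, dif_neg h1]
      rw [hv]
      linarith [D_le_one x z, D_nonneg y z]
end
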